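/- arXiv:1706.09655 — 3 statements merged into one kernel-verified Lean document; each statement's English description precedes it below -/
import Mathlib

section
/- Solution of the dual problem in the submartingale case: suppose α = 1, each coordinate process (S_i(t))_{t=1}^{T} is a submartingale with respect to (G_t) and P, V(1) ≥ 0 and b ≥ 0 componentwise, R(t) ≥ 0 componentwise almost surely for all t, and m − V(1) − Σ_{s=1}^{t−1} R(s) ≥ 0 componentwise almost surely for all t = 1,…,T−1. Then the dual variable y* defined by λ_t = v_t = w_t = 0 and γ_t := E[S(T) − S(t+1) | G_t] for t = 1,…,T−1 is almost surely nonnegative and dual feasible, Φ(y*) = E[S(T)·V(1) + Σ_{t=1}^{T−1} S(T)·R(t)], and every dual feasible variable y satisfies Φ(y) ≥ Φ(y*); hence y* attains the optimal dual value d* = E[S(T)·V(1) + Σ_{t=1}^{T−1} S(T)·R(t)]. -/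
/-! The tower property turns the submartingale inequality `S(t+1) ≤ E[S(T) | G_{t+1}]` into
`E[S(T) - S(t+1) | G_t] ≥ 0`, and on `G_t`-sets the constraint integrand of `y*`, which is
`E[h | G_t] - h` for `h = S(T) - S(t+1)`, integrates to zero. The dual value of any dual variable
exceeds that of `y*` by integrals of nonnegative multipliers against the nonnegative quantities
`V(1) + Σ R`, `b` and `m - V(1) - Σ R`. -/

open MeasureTheory Finset

noncomputable section

/-- A dual variable `y = (γ_t, v_t, λ_t, w_t)_{t=1}^{T-1}` consists of integrable
maps `Ω → ℝ^N` which are almost surely nonnegative componentwise. -/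
def IsDualVariable {Ω : Type*} {N : ℕ} [MeasurableSpace Ω] (P : Measure Ω) (T : ℕ)
    (gam v lam w : ℕ → Ω → Fin N → ℝ) : Prop :=
  (∀ t, 1 ≤ t → t ≤ T - 1 → ∀ i,
    Integrable (fun ω => gam t ω i) P ∧ Integrable (fun ω => v t ω i) P ∧
    Integrable (fun ω => lam t ω i) P ∧ Integrable (fun ω => w t ω i) P) ∧
  (∀ᵐ ω ∂P, ∀ t, 1 ≤ t → t ≤ T - 1 → ∀ i,
    0 ≤ gam t ω i ∧ 0 ≤ v t ω i ∧ 0 ≤ lam t ω i ∧ 0 ≤ w t ω i)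

/-- Dual feasibility: for every `t = 1, …, T-1` and every `A ∈ G_t`,
`∫_A (S(t+1) - α S(T) + γ_t - v_t - ∑_{s=t}^{T-1} λ_s + ∑_{s=t+1}^{T-1} w_s) dP = 0`
in `ℝ^N`. -/
def DualFeasible {Ω : Type*} {N : ℕ} [MeasurableSpace Ω] (P : Measure Ω) (T : ℕ)
    (G : ℕ → MeasurableSpace Ω) (S : ℕ → Ω → Fin N → ℝ) (α : ℝ)
    (gam v lam w : ℕ → Ω → Fin N → ℝ) : Prop :=
  ∀ t, 1 ≤ t → t ≤ T - 1 → ∀ A : Set Ω, MeasurableSet[G t] A → ∀ i,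
    ∫ ω in A, (S (t + 1) ω i - α * S T ω i + gam t ω i - v t ω i
      - ∑ s ∈ Finset.Icc t (T - 1), lam s ω i
      + ∑ s ∈ Finset.Icc (t + 1) (T - 1), w s ω i) ∂P = 0

/-- The dual value `Φ(y)`. -/
def dualValue {Ω : Type*} {N : ℕ} [MeasurableSpace Ω] (P : Measure Ω) (T : ℕ)
    (S R : ℕ → Ω → Fin N → ℝ) (V1 b m : Fin N → ℝ) (α : ℝ)
    (v lam w : ℕ → Ω → Fin N → ℝ) : ℝ :=
  α * ∫ ω, (∑ i, S T ω i * V1 i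
      + ∑ t ∈ Finset.Ico 1 T, ∑ i, S T ω i * R t ω i) ∂P
  + ∑ t ∈ Finset.Ico 1 T, ∫ ω,
      (∑ i, lam t ω i * (V1 i + ∑ s ∈ Finset.Ico 1 t, R s ω i)
       + ∑ i, v t ω i * b i
       + ∑ i, w t ω i * (m i - V1 i - ∑ s ∈ Finset.Ico 1 t, R s ω i)) ∂P

namespace MeasureTheory

variable {Ω : Type*} {m mΩ : MeasurableSpace Ω} {μ : Measure Ω} {f g : Ω → ℝ}

theorem ae_nonneg_condExp_sub_of_le_condExp [IsFiniteMeasure μ] {m' : MeasurableSpace Ω}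
    (hmm' : m ≤ m') (hm' : m' ≤ mΩ) (hf : Integrable f μ) (hg : Integrable g μ)
    (hfg : f ≤ᵐ[μ] μ[g|m']) : ∀ᵐ ω ∂μ, 0 ≤ μ[g - f|m] ω := by
  have hmono : μ[f|m] ≤ᵐ[μ] μ[μ[g|m']|m] := condExp_mono hf integrable_condExp hfg
  have htower : μ[μ[g|m']|m] =ᵐ[μ] μ[g|m] := condExp_condExp_of_le hmm' hm'
  filter_upwards [condExp_sub hg hf m, hmono, htower] with ω hsub hle heq
  rw [hsub, Pi.sub_apply, sub_nonneg]
  exact hle.trans_eq heq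

theorem setIntegral_condExp_sub_self (hm : m ≤ mΩ) [SigmaFinite (μ.trim hm)]
    (hf : Integrable f μ) {A : Set Ω} (hA : MeasurableSet[m] A) :
    ∫ ω in A, (μ[f|m] ω - f ω) ∂μ = 0 := by
  rw [integral_sub integrable_condExp.integrableOn hf.integrableOn, setIntegral_condExp hm hf hA,
    sub_self]

end MeasureTheory

section DualValue

variable {Ω : Type*} {N : ℕ} [MeasurableSpace Ω] {P : Measure Ω} {T : ℕ}
  {S R : ℕ → Ω → Fin N → ℝ} {V1 b m : Fin N → ℝ} {α : ℝ}

theorem dualValue_zero :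
    dualValue P T S R V1 b m α (fun _ _ _ => 0) (fun _ _ _ => 0) (fun _ _ _ => 0)
      = α * ∫ ω, (∑ i, S T ω i * V1 i + ∑ t ∈ Ico 1 T, ∑ i, S T ω i * R t ω i) ∂P := by
  simp [dualValue]

theorem dualValue_zero_le {gam v lam w : ℕ → Ω → Fin N → ℝ}
    (hy : IsDualVariable P T gam v lam w) (hV1 : ∀ i, 0 ≤ V1 i) (hb : ∀ i, 0 ≤ b i)
    (hR : ∀ᵐ ω ∂P, ∀ t, 1 ≤ t → t ≤ T - 1 → ∀ i, 0 ≤ R t ω i)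
    (hcap : ∀ᵐ ω ∂P, ∀ t, 1 ≤ t → t ≤ T - 1 → ∀ i,
      0 ≤ m i - V1 i - ∑ s ∈ Ico 1 t, R s ω i) :
    dualValue P T S R V1 b m α (fun _ _ _ => 0) (fun _ _ _ => 0) (fun _ _ _ => 0)
      ≤ dualValue P T S R V1 b m α v lam w := by
  rw [dualValue_zero, dualValue, le_add_iff_nonneg_right]
  refine sum_nonneg fun t ht => integral_nonneg_of_ae ?_
  obtain ⟨ht1, htT⟩ := mem_Ico.1 ht
  have htT' : t ≤ T - 1 := by omega
  filter_upwards [hy.2, hR, hcap] with ω hyω hRω hcapω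
  have hstored : ∀ i, 0 ≤ V1 i + ∑ s ∈ Ico 1 t, R s ω i := fun i =>
    add_nonneg (hV1 i) <| sum_nonneg fun s hs => by
      obtain ⟨hs1, hst⟩ := mem_Ico.1 hs
      exact hRω s hs1 (by omega) i
  refine add_nonneg (add_nonneg ?_ ?_) ?_ <;> refine sum_nonneg fun i _ => ?_
  · exact mul_nonneg (hyω t ht1 htT' i).2.2.1 (hstored i)
  · exact mul_nonneg (hyω t ht1 htT' i).2.1 (hb i)
  · exact mul_nonneg (hyω t ht1 htT' i).2.2.2 (hcapω t ht1 htT' i)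

end DualValue

theorem dual_solution_submartingale_general {Ω : Type*} {mΩ : MeasurableSpace Ω}
    (P : Measure Ω) [IsProbabilityMeasure P]
    (T N : ℕ)
    (G : ℕ → MeasurableSpace Ω)
    (hG_mono : ∀ s t, s ≤ t → G s ≤ G t) (hG_le : ∀ t, G t ≤ mΩ)
    (S R : ℕ → Ω → Fin N → ℝ)
    (hS_adapted : ∀ t, 1 ≤ t → t ≤ T → Measurable[G t] (S t))
    (hS_bdd : ∃ C : ℝ, ∀ t ω i, |S t ω i| ≤ C)
    (V1 b m : Fin N → ℝ) (α : ℝ) (hα : α = 1)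
    (hsubmart : ∀ s t, 1 ≤ s → s ≤ t → t ≤ T → ∀ i,
      (fun ω => S s ω i) ≤ᵐ[P] P[(fun ω => S t ω i)|G s])
    (hV1 : ∀ i, 0 ≤ V1 i) (hb : ∀ i, 0 ≤ b i)
    (hR_nonneg : ∀ᵐ ω ∂P, ∀ t, 1 ≤ t → t ≤ T - 1 → ∀ i, 0 ≤ R t ω i)
    (hno_flood : ∀ᵐ ω ∂P, ∀ t, 1 ≤ t → t ≤ T - 1 → ∀ i,
      0 ≤ m i - V1 i - ∑ s ∈ Finset.Ico 1 t, R s ω i)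
    (gamStar : ℕ → Ω → Fin N → ℝ)
    (hgamStar : ∀ t, 1 ≤ t → t ≤ T - 1 → ∀ i,
      (fun ω => gamStar t ω i)
        = P[(fun ω => S T ω i - S (t + 1) ω i)|G t]) :
    (∀ᵐ ω ∂P, ∀ t, 1 ≤ t → t ≤ T - 1 → ∀ i, 0 ≤ gamStar t ω i) ∧
    DualFeasible P T G S α gamStar
        (fun _ _ _ => 0) (fun _ _ _ => 0) (fun _ _ _ => 0) ∧
    dualValue P T S R V1 b m α (fun _ _ _ => 0) (fun _ _ _ => 0) (fun _ _ _ => 0)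
      = ∫ ω, (∑ i, S T ω i * V1 i
          + ∑ t ∈ Finset.Ico 1 T, ∑ i, S T ω i * R t ω i) ∂P ∧
    ∀ gam v lam w : ℕ → Ω → Fin N → ℝ,
      IsDualVariable P T gam v lam w → DualFeasible P T G S α gam v lam w →
      dualValue P T S R V1 b m α (fun _ _ _ => 0) (fun _ _ _ => 0) (fun _ _ _ => 0)
        ≤ dualValue P T S R V1 b m α v lam w := by
  obtain ⟨C, hC⟩ := hS_bdd
  have hSint : ∀ t, 1 ≤ t → t ≤ T → ∀ i, Integrable (fun ω => S t ω i) P := fun t h1 h2 i =>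
    Integrable.of_bound ((hS_adapted t h1 h2).mono (hG_le t) le_rfl).eval.aestronglyMeasurable C
      (ae_of_all _ fun ω => hC t ω i)
  refine ⟨?_, ?_, by rw [dualValue_zero, hα, one_mul], fun gam v lam w hy _ =>
    dualValue_zero_le hy hV1 hb hR_nonneg hno_flood⟩
  · simp only [ae_all_iff, Filter.eventually_imp_distrib_left]
    intro t h1 h2 i
    have hγ := congrFun (hgamStar t h1 h2 i)
    filter_upwards [ae_nonneg_condExp_sub_of_le_condExp (hG_mono t (t + 1) t.le_succ) (hG_le _)
      (hSint (t + 1) (by omega) (by omega) i) (hSint T (by omega) le_rfl i)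
      (hsubmart (t + 1) T (by omega) (by omega) le_rfl i)] with ω hω
    exact (hγ ω).trans_ge hω
  · intro t h1 h2 A hA i
    have hintegrand : (fun ω => S (t + 1) ω i - α * S T ω i + gamStar t ω i - 0
        - ∑ s ∈ Icc t (T - 1), (0 : ℝ) + ∑ s ∈ Icc (t + 1) (T - 1), (0 : ℝ))
        = fun ω => P[(fun ω => S T ω i - S (t + 1) ω i)|G t] ω - (S T ω i - S (t + 1) ω i) := by
      funext ω
      rw [← congrFun (hgamStar t h1 h2 i) ω, hα]
      simp only [sum_const_zero]
      ring
    rw [hintegrand]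
    exact setIntegral_condExp_sub_self (hG_le t)
      ((hSint T (by omega) le_rfl i).sub (hSint (t + 1) (by omega) (by omega) i)) hA

/-- **Solution of the dual problem in the submartingale case**: if `α = 1`, the
price process is a coordinatewise submartingale w.r.t. `(G_t)`, `V(1) ≥ 0`,
`b ≥ 0`, `R(t) ≥ 0` a.s., and a.s. no dam would flood even without draining, then
the dual variable `y*` given by `λ = v = w = 0` and `γ_t = E[S(T) - S(t+1) | G_t]`
is a.s. nonnegative and dual feasible, has value
`d* = E[S(T)·V(1) + ∑_{t=1}^{T-1} S(T)·R(t)]`, and every dual feasible variable `y`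
satisfies `Φ(y) ≥ Φ(y*)`; hence `y*` attains the optimal dual value `d*`. -/
theorem dual_solution_submartingale {Ω : Type*} {mΩ : MeasurableSpace Ω}
    (P : Measure Ω) [IsProbabilityMeasure P]
    (T N : ℕ) (hT : 2 ≤ T) (hN : 1 ≤ N)
    (G : ℕ → MeasurableSpace Ω)
    (hG_mono : ∀ s t, s ≤ t → G s ≤ G t) (hG_le : ∀ t, G t ≤ mΩ)
    (S R : ℕ → Ω → Fin N → ℝ)
    (hS_adapted : ∀ t, 1 ≤ t → t ≤ T → Measurable[G t] (S t))
    (hS_bdd : ∃ C : ℝ, ∀ t ω i, |S t ω i| ≤ C)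
    (hR_meas : ∀ t, Measurable (R t))
    (hR_bdd : ∃ C : ℝ, ∀ t ω i, |R t ω i| ≤ C)
    (V1 b m : Fin N → ℝ) (α : ℝ) (hα : α = 1)
    (hsubmart : ∀ s t, 1 ≤ s → s ≤ t → t ≤ T → ∀ i,
      (fun ω => S s ω i) ≤ᵐ[P] P[(fun ω => S t ω i)|G s])
    (hV1 : ∀ i, 0 ≤ V1 i) (hb : ∀ i, 0 ≤ b i)
    (hR_nonneg : ∀ᵐ ω ∂P, ∀ t, 1 ≤ t → t ≤ T - 1 → ∀ i, 0 ≤ R t ω i)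
    (hno_flood : ∀ᵐ ω ∂P, ∀ t, 1 ≤ t → t ≤ T - 1 → ∀ i,
      0 ≤ m i - V1 i - ∑ s ∈ Finset.Ico 1 t, R s ω i)
    (gamStar : ℕ → Ω → Fin N → ℝ)
    (hgamStar : ∀ t, 1 ≤ t → t ≤ T - 1 → ∀ i,
      (fun ω => gamStar t ω i)
        = P[(fun ω => S T ω i - S (t + 1) ω i)|G t]) :
    (∀ᵐ ω ∂P, ∀ t, 1 ≤ t → t ≤ T - 1 → ∀ i, 0 ≤ gamStar t ω i) ∧
    DualFeasible P T G S α gamStar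
        (fun _ _ _ => 0) (fun _ _ _ => 0) (fun _ _ _ => 0) ∧
    dualValue P T S R V1 b m α (fun _ _ _ => 0) (fun _ _ _ => 0) (fun _ _ _ => 0)
      = ∫ ω, (∑ i, S T ω i * V1 i
          + ∑ t ∈ Finset.Ico 1 T, ∑ i, S T ω i * R t ω i) ∂P ∧
    ∀ gam v lam w : ℕ → Ω → Fin N → ℝ,
      IsDualVariable P T gam v lam w → DualFeasible P T G S α gam v lam w →
      dualValue P T S R V1 b m α (fun _ _ _ => 0) (fun _ _ _ => 0) (fun _ _ _ => 0)
        ≤ dualValue P T S R V1 b m α v lam w :=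
  dual_solution_submartingale_general P T N G hG_mono hG_le S R hS_adapted hS_bdd V1 b m α hα
    hsubmart hV1 hb hR_nonneg hno_flood gamStar hgamStar
end
end

section
/- Weak duality for the hydropower problem with a total production constraint: let C̃ ∈ ℝ. If D is an admissible drain process that is feasible for the total-production problem (almost surely, D(t) ≥ 0 componentwise, Σ_{i=1}^{N} D_i(t) ≤ C̃, and D(t) ≤ V(t) ≤ m componentwise for all t = 1,…,T−1), and y = (γ_t, v_t, λ_t, w_t)_{t=1}^{T−1} is a total-production dual feasible variable, then J(D) ≤ Φ̃(y). -/
open MeasureTheory Finset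

noncomputable section

/-- Water level at time `t` induced by initial level `V1`, inflow `R` and drain `D`:
`V(t) = V(1) + ∑_{s=1}^{t-1} (R(s) - D(s))`. -/
def waterLevel {Ω : Type*} {N : ℕ} (V1 : Fin N → ℝ) (R D : ℕ → Ω → Fin N → ℝ)
    (t : ℕ) (ω : Ω) (i : Fin N) : ℝ :=
  V1 i + ∑ s ∈ Finset.Ico 1 t, (R s ω i - D s ω i)

/-- Expected revenue `J(D) = E[∑_{t=1}^{T-1} D(t)·S(t+1) + α S(T)·V(T)]`. -/
def revenue {Ω : Type*} {N : ℕ} [MeasurableSpace Ω] (P : Measure Ω) (T : ℕ)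
    (S R : ℕ → Ω → Fin N → ℝ) (V1 : Fin N → ℝ) (α : ℝ)
    (D : ℕ → Ω → Fin N → ℝ) : ℝ :=
  ∫ ω, (∑ t ∈ Finset.Ico 1 T, ∑ i, D t ω i * S (t + 1) ω i
    + α * ∑ i, S T ω i * waterLevel V1 R D T ω i) ∂P

/-- A drain process is admissible if each `D(t)` is `G t`-measurable and bounded,
for `t = 1, …, T-1`. -/
def Admissible {Ω : Type*} {N : ℕ} (T : ℕ) (G : ℕ → MeasurableSpace Ω)
    (D : ℕ → Ω → Fin N → ℝ) : Prop :=
  ∀ t, 1 ≤ t → t ≤ T - 1 →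
    Measurable[G t] (D t) ∧ ∃ C : ℝ, ∀ ω i, |D t ω i| ≤ C

/-- Feasibility for the total-production problem: almost surely, `D(t) ≥ 0`
componentwise, `∑_{i=1}^N D_i(t) ≤ C̃`, and `D(t) ≤ V(t) ≤ m` componentwise,
for all `t = 1, …, T-1`. -/
def FeasibleDrainTotal {Ω : Type*} {N : ℕ} [MeasurableSpace Ω] (P : Measure Ω)
    (T : ℕ) (R : ℕ → Ω → Fin N → ℝ) (V1 m : Fin N → ℝ) (Ctil : ℝ)
    (D : ℕ → Ω → Fin N → ℝ) : Prop :=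
  ∀ᵐ ω ∂P, ∀ t, 1 ≤ t → t ≤ T - 1 →
    (∀ i, 0 ≤ D t ω i) ∧ (∑ i, D t ω i) ≤ Ctil ∧
    (∀ i, D t ω i ≤ waterLevel V1 R D t ω i ∧ waterLevel V1 R D t ω i ≤ m i)

/-- A total-production dual variable `y = (γ_t, v_t, λ_t, w_t)_{t=1}^{T-1}`:
`γ_t, λ_t, w_t : Ω → ℝ^N` and `v_t : Ω → ℝ` integrable and a.s. nonnegative. -/
def IsDualVariableTotal {Ω : Type*} {N : ℕ} [MeasurableSpace Ω] (P : Measure Ω)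
    (T : ℕ) (gam lam w : ℕ → Ω → Fin N → ℝ) (v : ℕ → Ω → ℝ) : Prop :=
  (∀ t, 1 ≤ t → t ≤ T - 1 → Integrable (v t) P ∧ ∀ i,
    Integrable (fun ω => gam t ω i) P ∧
    Integrable (fun ω => lam t ω i) P ∧ Integrable (fun ω => w t ω i) P) ∧
  (∀ᵐ ω ∂P, ∀ t, 1 ≤ t → t ≤ T - 1 →
    0 ≤ v t ω ∧ ∀ i, 0 ≤ gam t ω i ∧ 0 ≤ lam t ω i ∧ 0 ≤ w t ω i)

/-- Total-production dual feasibility: for every `t = 1, …, T-1`, every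
`i = 1, …, N` and every `A ∈ G_t`,
`∫_A (S_i(t+1) - α S_i(T) + γ_{i,t} - v_t - ∑_{s=t}^{T-1} λ_{i,s}
  + ∑_{s=t+1}^{T-1} w_{i,s}) dP = 0`. -/
def DualFeasibleTotal {Ω : Type*} {N : ℕ} [MeasurableSpace Ω] (P : Measure Ω)
    (T : ℕ) (G : ℕ → MeasurableSpace Ω) (S : ℕ → Ω → Fin N → ℝ) (α : ℝ)
    (gam lam w : ℕ → Ω → Fin N → ℝ) (v : ℕ → Ω → ℝ) : Prop :=
  ∀ t, 1 ≤ t → t ≤ T - 1 → ∀ i, ∀ A : Set Ω, MeasurableSet[G t] A →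
    ∫ ω in A, (S (t + 1) ω i - α * S T ω i + gam t ω i - v t ω
      - ∑ s ∈ Finset.Icc t (T - 1), lam s ω i
      + ∑ s ∈ Finset.Icc (t + 1) (T - 1), w s ω i) ∂P = 0

/-- The total-production dual value
`Φ̃(y) = α E[S(T)·V(1) + ∑_{t=1}^{T-1} S(T)·R(t)]
  + ∑_{t=1}^{T-1} E[λ_t·(V(1) + ∑_{s=1}^{t-1} R(s)) + C̃ v_t
  + w_t·(m - V(1) - ∑_{s=1}^{t-1} R(s))]`. -/
def dualValueTotal {Ω : Type*} {N : ℕ} [MeasurableSpace Ω] (P : Measure Ω)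
    (T : ℕ) (S R : ℕ → Ω → Fin N → ℝ) (V1 m : Fin N → ℝ) (Ctil : ℝ) (α : ℝ)
    (lam w : ℕ → Ω → Fin N → ℝ) (v : ℕ → Ω → ℝ) : ℝ :=
  α * ∫ ω, (∑ i, S T ω i * V1 i
      + ∑ t ∈ Finset.Ico 1 T, ∑ i, S T ω i * R t ω i) ∂P
  + ∑ t ∈ Finset.Ico 1 T, ∫ ω,
      (∑ i, lam t ω i * (V1 i + ∑ s ∈ Finset.Ico 1 t, R s ω i)
       + Ctil * v t ω
       + ∑ i, w t ω i * (m i - V1 i - ∑ s ∈ Finset.Ico 1 t, R s ω i)) ∂P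


/-! Summation by parts in time turns the pathwise revenue plus the complementary-slackness
terms into the dual integrand plus `∑ₜ D(t) · rₜ`, where `rₜ` is the integrand of the dual
feasibility condition. The slackness terms are almost surely nonnegative, and
`E[D(t) · rₜ] = 0`: the drain `D(t)` is bounded and `G t`-measurable, while `rₜ` integrates
to zero over every set of `G t`, so its conditional expectation given `G t` vanishes. -/

open scoped ENNReal

namespace Finset

lemma mem_Ico_one_iff {t T : ℕ} : t ∈ Ico 1 T ↔ 1 ≤ t ∧ t ≤ T - 1 := by
  rw [mem_Ico]; omega

variable {M : Type*} [CommSemiring M]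

lemma sum_mul_sum_Icc_sub_one (a T : ℕ) (f g : ℕ → M) :
    ∑ t ∈ Ico a T, f t * ∑ s ∈ Icc t (T - 1), g s =
      ∑ s ∈ Ico a T, g s * ∑ t ∈ Icc a s, f t := by
  calc ∑ t ∈ Ico a T, f t * ∑ s ∈ Icc t (T - 1), g s
      = ∑ t ∈ Ico a T, ∑ s ∈ Ico t T, f t * g s := by
        refine sum_congr rfl fun t ht => ?_
        rw [Icc_sub_one_right_eq_Ico_of_not_isMin (by simp at ht ⊢; omega), mul_sum]
    _ = ∑ s ∈ Ico a T, g s * ∑ t ∈ Icc a s, f t := by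
        rw [sum_Ico_Ico_comm]
        simp only [Ico_add_one_right_eq_Icc, mul_sum, mul_comm]

lemma sum_mul_sum_Icc_add_one_sub_one (a T : ℕ) (f g : ℕ → M) :
    ∑ t ∈ Ico a T, f t * ∑ s ∈ Icc (t + 1) (T - 1), g s =
      ∑ s ∈ Ico a T, g s * ∑ t ∈ Ico a s, f t := by
  calc ∑ t ∈ Ico a T, f t * ∑ s ∈ Icc (t + 1) (T - 1), g s
      = ∑ t ∈ Ico a T, ∑ s ∈ Ico (t + 1) T, f t * g s := by
        refine sum_congr rfl fun t ht => ?_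
        rw [Icc_sub_one_right_eq_Ico_of_not_isMin (by simp at ht ⊢; omega), mul_sum]
    _ = ∑ s ∈ Ico a T, g s * ∑ t ∈ Ico a s, f t := by
        rw [sum_Ico_Ico_comm']
        simp only [mul_sum, mul_comm]

end Finset

section ConditionalExpectation

variable {Ω : Type*} {mΩ : MeasurableSpace Ω} {μ : Measure Ω}

lemma memLp_top_of_abs_le {f : Ω → ℝ} (hf : Measurable f) {C : ℝ} (hC : ∀ ω, |f ω| ≤ C) :
    MemLp f ∞ μ :=
  memLp_top_of_bound hf.aestronglyMeasurable C (ae_of_all _ hC)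

lemma integral_mul_eq_zero_of_forall_setIntegral_eq_zero [IsFiniteMeasure μ]
    {m : MeasurableSpace Ω} (hm : m ≤ mΩ) {f d : Ω → ℝ} (hf : Integrable f μ)
    (hd : StronglyMeasurable[m] d) (hd_bdd : MemLp d ∞ μ)
    (h : ∀ A, MeasurableSet[m] A → ∫ ω in A, f ω ∂μ = 0) :
    ∫ ω, d ω * f ω ∂μ = 0 := by
  have hdf : Integrable (d * f) μ := hf.mul_of_top_right hd_bdd
  have hcond : μ[f|m] =ᵐ[μ] 0 :=
    (ae_eq_condExp_of_forall_setIntegral_eq hm hf (fun _ _ _ => integrableOn_zero)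
      (fun A hA _ => by simp [h A hA]) aestronglyMeasurable_zero).symm
  calc ∫ ω, d ω * f ω ∂μ = ∫ ω, (μ[d * f|m]) ω ∂μ := (integral_condExp hm).symm
    _ = ∫ ω, (d * μ[f|m]) ω ∂μ :=
      integral_congr_ae (condExp_mul_of_stronglyMeasurable_left hd hdf hf)
    _ = ∫ ω, (0 : Ω → ℝ) ω ∂μ := integral_congr_ae (hcond.mono fun ω hω => by simp [hω])
    _ = 0 := by simp

end ConditionalExpectation

def revenueIntegrand {Ω : Type*} {N : ℕ} (T : ℕ) (S R : ℕ → Ω → Fin N → ℝ)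
    (V1 : Fin N → ℝ) (α : ℝ) (D : ℕ → Ω → Fin N → ℝ) (ω : Ω) : ℝ :=
  ∑ t ∈ Ico 1 T, ∑ i, D t ω i * S (t + 1) ω i + α * ∑ i, S T ω i * waterLevel V1 R D T ω i

def dualResidual {Ω : Type*} {N : ℕ} (T : ℕ) (S : ℕ → Ω → Fin N → ℝ) (α : ℝ)
    (gam lam w : ℕ → Ω → Fin N → ℝ) (v : ℕ → Ω → ℝ) (t : ℕ) (ω : Ω) (i : Fin N) : ℝ :=
  S (t + 1) ω i - α * S T ω i + gam t ω i - v t ω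
    - ∑ s ∈ Icc t (T - 1), lam s ω i + ∑ s ∈ Icc (t + 1) (T - 1), w s ω i

def inflowValue {Ω : Type*} {N : ℕ} (T : ℕ) (S R : ℕ → Ω → Fin N → ℝ) (V1 : Fin N → ℝ)
    (ω : Ω) : ℝ :=
  ∑ i, S T ω i * V1 i + ∑ t ∈ Ico 1 T, ∑ i, S T ω i * R t ω i

def stageDualCost {Ω : Type*} {N : ℕ} (R : ℕ → Ω → Fin N → ℝ) (V1 m : Fin N → ℝ) (Ctil : ℝ)
    (lam w : ℕ → Ω → Fin N → ℝ) (v : ℕ → Ω → ℝ) (t : ℕ) (ω : Ω) : ℝ :=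
  ∑ i, lam t ω i * (V1 i + ∑ s ∈ Ico 1 t, R s ω i) + Ctil * v t ω
    + ∑ i, w t ω i * (m i - V1 i - ∑ s ∈ Ico 1 t, R s ω i)

def dualIntegrand {Ω : Type*} {N : ℕ} (T : ℕ) (S R : ℕ → Ω → Fin N → ℝ) (V1 m : Fin N → ℝ)
    (Ctil α : ℝ) (lam w : ℕ → Ω → Fin N → ℝ) (v : ℕ → Ω → ℝ) (ω : Ω) : ℝ :=
  α * inflowValue T S R V1 ω + ∑ t ∈ Ico 1 T, stageDualCost R V1 m Ctil lam w v t ω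

-- Each summand is a dual multiplier times the slack of the primal constraint it prices.
def dualityGap {Ω : Type*} {N : ℕ} (T : ℕ) (R : ℕ → Ω → Fin N → ℝ) (V1 m : Fin N → ℝ)
    (Ctil : ℝ) (D gam lam w : ℕ → Ω → Fin N → ℝ) (v : ℕ → Ω → ℝ) (ω : Ω) : ℝ :=
  ∑ t ∈ Ico 1 T, (∑ i, (D t ω i * gam t ω i
      + lam t ω i * (waterLevel V1 R D t ω i - D t ω i)
      + w t ω i * (m i - waterLevel V1 R D t ω i))
    + (Ctil - ∑ i, D t ω i) * v t ω)

lemma revenueIntegrand_add_dualityGap {Ω : Type*} {N : ℕ} (T : ℕ) (S R : ℕ → Ω → Fin N → ℝ)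
    (V1 m : Fin N → ℝ) (Ctil α : ℝ) (D gam lam w : ℕ → Ω → Fin N → ℝ) (v : ℕ → Ω → ℝ) (ω : Ω) :
    revenueIntegrand T S R V1 α D ω + dualityGap T R V1 m Ctil D gam lam w v ω =
      dualIntegrand T S R V1 m Ctil α lam w v ω
        + ∑ t ∈ Ico 1 T, ∑ i, D t ω i * dualResidual T S α gam lam w v t ω i := by
  have hV : ∀ t i, waterLevel V1 R D t ω i
      = V1 i + ∑ s ∈ Ico 1 t, R s ω i - ∑ s ∈ Ico 1 t, D s ω i := fun t i => by
    rw [waterLevel, sum_sub_distrib, add_sub_assoc]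
  have hR : ∑ i, S T ω i * ∑ t ∈ Ico 1 T, R t ω i = ∑ t ∈ Ico 1 T, ∑ i, S T ω i * R t ω i := by
    simp_rw [mul_sum]
    exact sum_comm
  have hD : α * ∑ i, S T ω i * ∑ t ∈ Ico 1 T, D t ω i
      = ∑ t ∈ Ico 1 T, ∑ i, D t ω i * (α * S T ω i) := by
    simp_rw [mul_sum]
    rw [sum_comm]
    exact sum_congr rfl fun _ _ => sum_congr rfl fun _ _ => by ring
  have hlam : ∑ t ∈ Ico 1 T, ∑ i, D t ω i * ∑ s ∈ Icc t (T - 1), lam s ω i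
      = ∑ t ∈ Ico 1 T, ∑ i, lam t ω i * ∑ s ∈ Ico 1 t, D s ω i
        + ∑ t ∈ Ico 1 T, ∑ i, lam t ω i * D t ω i := by
    simp only [← sum_add_distrib, ← mul_add]
    rw [sum_comm, sum_comm (s := Ico 1 T)]
    refine sum_congr rfl fun i _ => ?_
    rw [sum_mul_sum_Icc_sub_one]
    refine sum_congr rfl fun t ht => ?_
    rw [← Ico_add_one_right_eq_Icc, sum_Ico_succ_top (mem_Ico.1 ht).1]
  have hw : ∑ t ∈ Ico 1 T, ∑ i, D t ω i * ∑ s ∈ Icc (t + 1) (T - 1), w s ω i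
      = ∑ t ∈ Ico 1 T, ∑ i, w t ω i * ∑ s ∈ Ico 1 t, D s ω i := by
    rw [sum_comm, sum_comm (s := Ico 1 T)]
    exact sum_congr rfl fun i _ => sum_mul_sum_Icc_add_one_sub_one _ _ _ _
  have hv : ∑ t ∈ Ico 1 T, (∑ i, D t ω i) * v t ω = ∑ t ∈ Ico 1 T, ∑ i, D t ω i * v t ω := by
    simp_rw [sum_mul]
  simp only [revenueIntegrand, dualityGap, dualIntegrand, inflowValue, stageDualCost,
    dualResidual, hV, mul_add, mul_sub, sub_mul, sum_add_distrib, sum_sub_distrib]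
  linear_combination α * hR - hD + hlam - hw - hv

lemma dualityGap_nonneg {Ω : Type*} {N : ℕ} {T : ℕ} {R : ℕ → Ω → Fin N → ℝ} {V1 m : Fin N → ℝ}
    {Ctil : ℝ} {D gam lam w : ℕ → Ω → Fin N → ℝ} {v : ℕ → Ω → ℝ} {ω : Ω}
    (hD : ∀ t, 1 ≤ t → t ≤ T - 1 →
      (∀ i, 0 ≤ D t ω i) ∧ (∑ i, D t ω i) ≤ Ctil ∧
      (∀ i, D t ω i ≤ waterLevel V1 R D t ω i ∧ waterLevel V1 R D t ω i ≤ m i))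
    (hy : ∀ t, 1 ≤ t → t ≤ T - 1 →
      0 ≤ v t ω ∧ ∀ i, 0 ≤ gam t ω i ∧ 0 ≤ lam t ω i ∧ 0 ≤ w t ω i) :
    0 ≤ dualityGap T R V1 m Ctil D gam lam w v ω := by
  refine sum_nonneg fun t ht => ?_
  obtain ⟨ht₁, ht₂⟩ := mem_Ico_one_iff.1 ht
  obtain ⟨hD_nonneg, hD_total, hD_level⟩ := hD t ht₁ ht₂
  obtain ⟨hv, hy⟩ := hy t ht₁ ht₂
  refine add_nonneg (sum_nonneg fun i _ => ?_) (mul_nonneg (sub_nonneg.2 hD_total) hv)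
  obtain ⟨hgam, hlam, hw⟩ := hy i
  have hlevel := hD_level i
  exact add_nonneg (add_nonneg (mul_nonneg (hD_nonneg i) hgam)
    (mul_nonneg hlam (sub_nonneg.2 hlevel.1))) (mul_nonneg hw (sub_nonneg.2 hlevel.2))

section Integrals

variable {Ω : Type*} {mΩ : MeasurableSpace Ω} {P : Measure Ω} {N T : ℕ}

lemma Admissible.measurable_apply {G : ℕ → MeasurableSpace Ω} {D : ℕ → Ω → Fin N → ℝ}
    (hD : Admissible T G D) {t : ℕ} (ht : t ∈ Ico 1 T) (i : Fin N) :
    Measurable[G t] fun ω => D t ω i :=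
  (measurable_pi_apply i).comp (hD t (mem_Ico_one_iff.1 ht).1 (mem_Ico_one_iff.1 ht).2).1

lemma Admissible.memLp_top {G : ℕ → MeasurableSpace Ω} {D : ℕ → Ω → Fin N → ℝ}
    (hD : Admissible T G D) (hG : ∀ t, G t ≤ mΩ) {t : ℕ} (ht : t ∈ Ico 1 T) (i : Fin N) :
    MemLp (fun ω => D t ω i) ∞ P := by
  obtain ⟨C, hC⟩ := (hD t (mem_Ico_one_iff.1 ht).1 (mem_Ico_one_iff.1 ht).2).2
  exact memLp_top_of_abs_le ((hD.measurable_apply ht i).mono (hG t) le_rfl) fun ω => hC ω i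

lemma Admissible.integrable_mul {G : ℕ → MeasurableSpace Ω} {D : ℕ → Ω → Fin N → ℝ}
    (hD : Admissible T G D) (hG : ∀ t, G t ≤ mΩ) {f : Ω → ℝ} (hf : Integrable f P)
    {t : ℕ} (ht : t ∈ Ico 1 T) (i : Fin N) :
    Integrable (fun ω => D t ω i * f ω) P :=
  hf.mul_of_top_right (hD.memLp_top hG ht i)

lemma memLp_top_waterLevel {R D : ℕ → Ω → Fin N → ℝ} (V1 : Fin N → ℝ) {t : ℕ} {i : Fin N}
    (hR : ∀ s ∈ Ico 1 t, MemLp (fun ω => R s ω i) ∞ P)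
    (hD : ∀ s ∈ Ico 1 t, MemLp (fun ω => D s ω i) ∞ P) :
    MemLp (fun ω => waterLevel V1 R D t ω i) ∞ P :=
  (memLp_top_const (V1 i)).add (memLp_finsetSum _ fun s hs => (hR s hs).sub (hD s hs))

lemma integrable_revenueIntegrand [IsFiniteMeasure P] {S R D : ℕ → Ω → Fin N → ℝ}
    (V1 : Fin N → ℝ) (α : ℝ) (hT : 1 ≤ T)
    (hS : ∀ t ∈ Icc 1 T, ∀ i, MemLp (fun ω => S t ω i) ∞ P)
    (hR : ∀ t ∈ Ico 1 T, ∀ i, MemLp (fun ω => R t ω i) ∞ P)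
    (hD : ∀ t ∈ Ico 1 T, ∀ i, MemLp (fun ω => D t ω i) ∞ P) :
    Integrable (revenueIntegrand T S R V1 α D) P := by
  have hS_next : ∀ t ∈ Ico 1 T, t + 1 ∈ Icc 1 T := fun t ht => by
    simp only [mem_Ico, mem_Icc] at ht ⊢; omega
  have hS_T : T ∈ Icc 1 T := mem_Icc.2 ⟨hT, le_rfl⟩
  have hdrain : MemLp (fun ω => ∑ t ∈ Ico 1 T, ∑ i, D t ω i * S (t + 1) ω i) ∞ P :=
    memLp_finsetSum _ fun t ht => memLp_finsetSum _ fun i _ =>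
      (hS _ (hS_next t ht) i).mul' (hD t ht i)
  have hterminal : MemLp (fun ω => ∑ i, S T ω i * waterLevel V1 R D T ω i) ∞ P :=
    memLp_finsetSum _ fun i _ =>
      (memLp_top_waterLevel V1 (hR · · i) (hD · · i)).mul' (hS T hS_T i)
  exact (hdrain.add (hterminal.const_mul α)).integrable le_top

lemma integrable_dualResidual {S gam lam w : ℕ → Ω → Fin N → ℝ} {v : ℕ → Ω → ℝ} (α : ℝ)
    (hS : ∀ t ∈ Icc 1 T, ∀ i, Integrable (fun ω => S t ω i) P)
    (hy : IsDualVariableTotal P T gam lam w v) (t : ℕ) (ht : t ∈ Ico 1 T) (i : Fin N) :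
    Integrable (fun ω => dualResidual T S α gam lam w v t ω i) P := by
  obtain ⟨ht₁, ht₂⟩ := mem_Ico_one_iff.1 ht
  have hS_next : Integrable (fun ω => S (t + 1) ω i) P := hS _ (mem_Icc.2 ⟨by omega, by omega⟩) i
  have hS_T : Integrable (fun ω => S T ω i) P := hS _ (mem_Icc.2 ⟨by omega, le_rfl⟩) i
  have hlam : Integrable (fun ω => ∑ s ∈ Icc t (T - 1), lam s ω i) P :=
    integrable_finsetSum _ fun s hs => ((hy.1 s (by simp at hs; omega) (mem_Icc.1 hs).2).2 i).2.1
  have hw : Integrable (fun ω => ∑ s ∈ Icc (t + 1) (T - 1), w s ω i) P :=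
    integrable_finsetSum _ fun s hs => ((hy.1 s (by simp at hs; omega) (mem_Icc.1 hs).2).2 i).2.2
  exact ((((hS_next.sub (hS_T.const_mul α)).add ((hy.1 t ht₁ ht₂).2 i).1).sub
    (hy.1 t ht₁ ht₂).1).sub hlam).add hw

lemma integrable_inflowValue [IsFiniteMeasure P] {S R : ℕ → Ω → Fin N → ℝ} (V1 : Fin N → ℝ)
    (hS_T : ∀ i, MemLp (fun ω => S T ω i) ∞ P) (hR : ∀ t i, MemLp (fun ω => R t ω i) ∞ P) :
    Integrable (inflowValue T S R V1) P :=
  MemLp.integrable le_top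
    ((memLp_finsetSum _ fun i _ => (memLp_top_const (V1 i)).mul' (hS_T i)).add
      (memLp_finsetSum _ fun t _ => memLp_finsetSum _ fun i _ => (hR t i).mul' (hS_T i)))

lemma integrable_stageDualCost {R gam lam w : ℕ → Ω → Fin N → ℝ} {v : ℕ → Ω → ℝ}
    (V1 m : Fin N → ℝ) (Ctil : ℝ) (hR : ∀ t i, MemLp (fun ω => R t ω i) ∞ P)
    (hy : IsDualVariableTotal P T gam lam w v) {t : ℕ} (ht : t ∈ Ico 1 T) :
    Integrable (stageDualCost R V1 m Ctil lam w v t) P := by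
  obtain ⟨ht₁, ht₂⟩ := mem_Ico_one_iff.1 ht
  have hR_past : ∀ i, MemLp (fun ω => ∑ s ∈ Ico 1 t, R s ω i) ∞ P := fun i =>
    memLp_finsetSum _ fun s _ => hR s i
  exact ((integrable_finsetSum _ fun i _ => ((hy.1 t ht₁ ht₂).2 i).2.1.mul_of_top_left
      ((memLp_top_const (V1 i)).add (hR_past i))).add ((hy.1 t ht₁ ht₂).1.const_mul Ctil)).add
    (integrable_finsetSum _ fun i _ => ((hy.1 t ht₁ ht₂).2 i).2.2.mul_of_top_left
      ((memLp_top_const (m i - V1 i)).sub (hR_past i)))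

lemma dualValueTotal_eq_integral {S R lam w : ℕ → Ω → Fin N → ℝ} {v : ℕ → Ω → ℝ}
    {V1 m : Fin N → ℝ} {Ctil : ℝ} (α : ℝ) (hX : Integrable (inflowValue T S R V1) P)
    (hY : ∀ t ∈ Ico 1 T, Integrable (stageDualCost R V1 m Ctil lam w v t) P) :
    dualValueTotal P T S R V1 m Ctil α lam w v
      = ∫ ω, dualIntegrand T S R V1 m Ctil α lam w v ω ∂P := by
  unfold dualIntegrand
  rw [integral_add (hX.const_mul α) (integrable_finsetSum _ hY),
    integral_const_mul, integral_finsetSum _ hY]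
  rfl

lemma Admissible.integrable_sum_mul {G : ℕ → MeasurableSpace Ω} {D : ℕ → Ω → Fin N → ℝ}
    (hD : Admissible T G D) (hG : ∀ t, G t ≤ mΩ) {f : ℕ → Ω → Fin N → ℝ}
    (hf : ∀ t ∈ Ico 1 T, ∀ i, Integrable (fun ω => f t ω i) P) :
    Integrable (fun ω => ∑ t ∈ Ico 1 T, ∑ i, D t ω i * f t ω i) P :=
  integrable_finsetSum _ fun t ht => integrable_finsetSum _ fun i _ =>
    hD.integrable_mul hG (hf t ht i) ht i

lemma integral_sum_mul_dualResidual_eq_zero [IsFiniteMeasure P] {G : ℕ → MeasurableSpace Ω}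
    {S D gam lam w : ℕ → Ω → Fin N → ℝ} {v : ℕ → Ω → ℝ} {α : ℝ}
    (hD : Admissible T G D) (hG : ∀ t, G t ≤ mΩ)
    (hres : ∀ t ∈ Ico 1 T, ∀ i, Integrable (fun ω => dualResidual T S α gam lam w v t ω i) P)
    (hfeas : DualFeasibleTotal P T G S α gam lam w v) :
    ∫ ω, ∑ t ∈ Ico 1 T, ∑ i, D t ω i * dualResidual T S α gam lam w v t ω i ∂P = 0 := by
  rw [integral_finsetSum _ fun t ht => integrable_finsetSum _ fun i _ =>
    hD.integrable_mul hG (hres t ht i) ht i]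
  refine sum_eq_zero fun t ht => ?_
  rw [integral_finsetSum _ fun i _ => hD.integrable_mul hG (hres t ht i) ht i]
  refine sum_eq_zero fun i _ => ?_
  obtain ⟨ht₁, ht₂⟩ := mem_Ico_one_iff.1 ht
  exact integral_mul_eq_zero_of_forall_setIntegral_eq_zero (hG t) (hres t ht i)
    (hD.measurable_apply ht i).stronglyMeasurable (hD.memLp_top hG ht i) (hfeas t ht₁ ht₂ i)

end Integrals

theorem weak_duality_total_general {Ω : Type*} {mΩ : MeasurableSpace Ω}
    (P : Measure Ω) [IsProbabilityMeasure P]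
    (T N : ℕ) (hT : 2 ≤ T)
    (G : ℕ → MeasurableSpace Ω)
    (hG_le : ∀ t, G t ≤ mΩ)
    (S R : ℕ → Ω → Fin N → ℝ)
    (hS_adapted : ∀ t, 1 ≤ t → t ≤ T → Measurable[G t] (S t))
    (hS_bdd : ∃ C : ℝ, ∀ t ω i, |S t ω i| ≤ C)
    (hR_meas : ∀ t, Measurable (R t))
    (hR_bdd : ∃ C : ℝ, ∀ t ω i, |R t ω i| ≤ C)
    (V1 m : Fin N → ℝ) (Ctil : ℝ) (α : ℝ)
    (D : ℕ → Ω → Fin N → ℝ)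
    (hD_adm : Admissible T G D)
    (hD_feas : FeasibleDrainTotal P T R V1 m Ctil D)
    (gam lam w : ℕ → Ω → Fin N → ℝ) (v : ℕ → Ω → ℝ)
    (hy : IsDualVariableTotal P T gam lam w v)
    (hy_feas : DualFeasibleTotal P T G S α gam lam w v) :
    revenue P T S R V1 α D ≤ dualValueTotal P T S R V1 m Ctil α lam w v := by
  obtain ⟨CS, hCS⟩ := hS_bdd
  obtain ⟨CR, hCR⟩ := hR_bdd
  have hS : ∀ t ∈ Icc 1 T, ∀ i, MemLp (fun ω => S t ω i) ∞ P := fun t ht i =>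
    memLp_top_of_abs_le ((measurable_pi_apply i).comp
      ((hS_adapted t (mem_Icc.1 ht).1 (mem_Icc.1 ht).2).mono (hG_le t) le_rfl)) fun ω => hCS t ω i
  have hR : ∀ t i, MemLp (fun ω => R t ω i) ∞ P := fun t i =>
    memLp_top_of_abs_le ((measurable_pi_apply i).comp (hR_meas t)) fun ω => hCR t ω i
  have hS_T : ∀ i, MemLp (fun ω => S T ω i) ∞ P := hS T (mem_Icc.2 ⟨by omega, le_rfl⟩)
  have hres := integrable_dualResidual α (fun t ht i => (hS t ht i).integrable le_top) hy
  have hdual : Integrable (dualIntegrand T S R V1 m Ctil α lam w v) P :=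
    ((integrable_inflowValue V1 hS_T hR).const_mul α).add
      (integrable_finsetSum _ fun t ht => integrable_stageDualCost V1 m Ctil hR hy ht)
  have hgap : Integrable (fun ω => ∑ t ∈ Ico 1 T, ∑ i, D t ω i
      * dualResidual T S α gam lam w v t ω i) P := hD_adm.integrable_sum_mul hG_le hres
  calc revenue P T S R V1 α D = ∫ ω, revenueIntegrand T S R V1 α D ω ∂P := rfl
    _ ≤ ∫ ω, (dualIntegrand T S R V1 m Ctil α lam w v ω
          + ∑ t ∈ Ico 1 T, ∑ i, D t ω i * dualResidual T S α gam lam w v t ω i) ∂P := by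
      refine integral_mono_ae (integrable_revenueIntegrand V1 α (by omega) hS
        (fun t _ => hR t) (fun t ht => hD_adm.memLp_top hG_le ht)) (hdual.add hgap) ?_
      filter_upwards [hD_feas, hy.2] with ω hD_ω hy_ω
      linarith [revenueIntegrand_add_dualityGap T S R V1 m Ctil α D gam lam w v ω,
        dualityGap_nonneg hD_ω hy_ω]
    _ = ∫ ω, dualIntegrand T S R V1 m Ctil α lam w v ω ∂P := by
      rw [integral_add hdual hgap,
        integral_sum_mul_dualResidual_eq_zero hD_adm hG_le hres hy_feas, add_zero]
    _ = dualValueTotal P T S R V1 m Ctil α lam w v :=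
      (dualValueTotal_eq_integral α (integrable_inflowValue V1 hS_T hR)
        fun t ht => integrable_stageDualCost V1 m Ctil hR hy ht).symm

/-- **Weak duality for the hydropower problem with a total production
constraint**: if `D` is an admissible drain process, feasible for the
total-production problem, and `y` is a total-production dual feasible variable,
then `J(D) ≤ Φ̃(y)`. -/
theorem weak_duality_total {Ω : Type*} {mΩ : MeasurableSpace Ω}
    (P : Measure Ω) [IsProbabilityMeasure P]
    (T N : ℕ) (hT : 2 ≤ T) (hN : 1 ≤ N)
    (G : ℕ → MeasurableSpace Ω)
    (hG_mono : ∀ s t, s ≤ t → G s ≤ G t) (hG_le : ∀ t, G t ≤ mΩ)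
    (S R : ℕ → Ω → Fin N → ℝ)
    (hS_adapted : ∀ t, 1 ≤ t → t ≤ T → Measurable[G t] (S t))
    (hS_bdd : ∃ C : ℝ, ∀ t ω i, |S t ω i| ≤ C)
    (hR_meas : ∀ t, Measurable (R t))
    (hR_bdd : ∃ C : ℝ, ∀ t ω i, |R t ω i| ≤ C)
    (V1 m : Fin N → ℝ) (Ctil : ℝ) (α : ℝ)
    (D : ℕ → Ω → Fin N → ℝ)
    (hD_adm : Admissible T G D)
    (hD_feas : FeasibleDrainTotal P T R V1 m Ctil D)
    (gam lam w : ℕ → Ω → Fin N → ℝ) (v : ℕ → Ω → ℝ)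
    (hy : IsDualVariableTotal P T gam lam w v)
    (hy_feas : DualFeasibleTotal P T G S α gam lam w v) :
    revenue P T S R V1 α D ≤ dualValueTotal P T S R V1 m Ctil α lam w v :=
  weak_duality_total_general P T N hT G hG_le S R hS_adapted hS_bdd hR_meas hR_bdd V1 m Ctil α D
    hD_adm hD_feas gam lam w v hy hy_feas
end
end

section
/- Solution of the total-production dual problem in the martingale case: suppose α = 1, each coordinate process (S_i(t))_{t=1}^{T} is a martingale with respect to (G_t) and P, V(1) ≥ 0 componentwise, C̃ ≥ 0, R(t) ≥ 0 componentwise almost surely for all t, and m − V(1) − Σ_{s=1}^{t−1} R(s) ≥ 0 componentwise almost surely for all t = 1,…,T−1. Then the zero dual variable is total-production dual feasible, and every total-production dual feasible variable y satisfies Φ̃(y) ≥ E[S(T)·V(1) + Σ_{t=1}^{T−1} S(T)·R(t)]; hence the optimal value of the total-production dual problem is d* = E[S(T)·V(1) + Σ_{t=1}^{T−1} S(T)·R(t)], attained at y = 0. -/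
open MeasureTheory Finset

noncomputable section

/-
A martingale has zero conditional increments, so with α = 1 the feasibility integrand
`S_i(t+1) - S_i(T)` of the zero dual variable integrates to zero over every `A ∈ G_t`; its value is
the first term of `Φ̃`. Integrability of the prices needs no bound: `S(u) = E[S(u) | G_u]` a.s.,
and conditional expectations are integrable. For any nonnegative dual variable the remaining terms of `Φ̃` are
expectations of products of nonnegative multipliers with the nonnegative quantities
`V(1) + Σ R(s)` (water received) and `m - V(1) - Σ R(s)` (room left), so `Φ̃(y) ≥ Φ̃(0)`.
-/

section CondExp

variable {Ω : Type*} {m m₀ : MeasurableSpace Ω} {μ : Measure Ω} {f g : Ω → ℝ}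

theorem setIntegral_eq_of_condExp_ae_eq (hm : m ≤ m₀) [SigmaFinite (μ.trim hm)]
    (hf : Integrable f μ) (h : μ[f|m] =ᵐ[μ] g) {A : Set Ω} (hA : MeasurableSet[m] A) :
    ∫ x in A, f x ∂μ = ∫ x in A, g x ∂μ := by
  rw [← setIntegral_condExp hm hf hA]
  exact setIntegral_congr_ae (hm A hA) (h.mono fun x hx _ => hx)

end CondExp

section DamDual

variable {Ω : Type*} {mΩ : MeasurableSpace Ω} {P : Measure Ω} {T N : ℕ}

theorem dualFeasibleTotal_zero_of_martingale [IsFiniteMeasure P]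
    {G : ℕ → MeasurableSpace Ω} {S : ℕ → Ω → Fin N → ℝ} (hG_le : ∀ t, G t ≤ mΩ)
    (hmart : ∀ s t, 1 ≤ s → s ≤ t → t ≤ T → ∀ i,
      P[(fun ω => S t ω i)|G s] =ᵐ[P] fun ω => S s ω i) :
    DualFeasibleTotal P T G S 1
      (fun _ _ _ => 0) (fun _ _ _ => 0) (fun _ _ _ => 0) (fun _ _ => 0) := by
  intro t ht1 htT i A hA
  have hint : ∀ u, 1 ≤ u → u ≤ T → Integrable (fun ω => S u ω i) P := fun u hu1 huT =>
    integrable_condExp.congr (hmart u u hu1 le_rfl huT i)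
  have hstep : ∫ ω in A, S (t + 1) ω i ∂P = ∫ ω in A, S t ω i ∂P :=
    setIntegral_eq_of_condExp_ae_eq (hG_le t) (hint (t + 1) (by omega) (by omega))
      (hmart t (t + 1) ht1 (by omega) (by omega) i) hA
  have hfinal : ∫ ω in A, S T ω i ∂P = ∫ ω in A, S t ω i ∂P :=
    setIntegral_eq_of_condExp_ae_eq (hG_le t) (hint T (by omega) le_rfl)
      (hmart t T ht1 (by omega) le_rfl i) hA
  simp only [one_mul, add_zero, sub_zero, Finset.sum_const_zero]
  rw [integral_sub (hint (t + 1) (by omega) (by omega)).integrableOn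
    (hint T (by omega) le_rfl).integrableOn, hstep, hfinal, sub_self]

theorem dualValueTotal_zero (S R : ℕ → Ω → Fin N → ℝ) (V1 m : Fin N → ℝ) (Ctil α : ℝ) :
    dualValueTotal P T S R V1 m Ctil α (fun _ _ _ => 0) (fun _ _ _ => 0) (fun _ _ => 0)
      = α * ∫ ω, (∑ i, S T ω i * V1 i
          + ∑ t ∈ Finset.Ico 1 T, ∑ i, S T ω i * R t ω i) ∂P := by
  simp [dualValueTotal]

theorem le_dualValueTotal {S R : ℕ → Ω → Fin N → ℝ} {V1 m : Fin N → ℝ} {Ctil : ℝ} (α : ℝ)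
    (hV1 : ∀ i, 0 ≤ V1 i) (hC : 0 ≤ Ctil)
    (hR_nonneg : ∀ᵐ ω ∂P, ∀ t, 1 ≤ t → t ≤ T - 1 → ∀ i, 0 ≤ R t ω i)
    (hno_flood : ∀ᵐ ω ∂P, ∀ t, 1 ≤ t → t ≤ T - 1 → ∀ i,
      0 ≤ m i - V1 i - ∑ s ∈ Finset.Ico 1 t, R s ω i)
    {gam lam w : ℕ → Ω → Fin N → ℝ} {v : ℕ → Ω → ℝ}
    (hy : IsDualVariableTotal P T gam lam w v) :
    α * ∫ ω, (∑ i, S T ω i * V1 i + ∑ t ∈ Finset.Ico 1 T, ∑ i, S T ω i * R t ω i) ∂P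
      ≤ dualValueTotal P T S R V1 m Ctil α lam w v := by
  refine le_add_of_nonneg_right (Finset.sum_nonneg fun t ht => integral_nonneg_of_ae ?_)
  obtain ⟨ht1, htT⟩ := Finset.mem_Ico.mp ht
  filter_upwards [hy.2, hR_nonneg, hno_flood] with ω hyω hRω hroomω
  obtain ⟨hv, hmult⟩ := hyω t ht1 (by omega)
  have hreceived : ∀ i, 0 ≤ V1 i + ∑ s ∈ Finset.Ico 1 t, R s ω i := fun i =>
    add_nonneg (hV1 i) (Finset.sum_nonneg fun s hs =>
      hRω s (Finset.mem_Ico.mp hs).1 (by have := (Finset.mem_Ico.mp hs).2; omega) i)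
  refine add_nonneg (add_nonneg ?_ (mul_nonneg hC hv)) ?_
  · exact Finset.sum_nonneg fun i _ => mul_nonneg (hmult i).2.1 (hreceived i)
  · exact Finset.sum_nonneg fun i _ =>
      mul_nonneg (hmult i).2.2 (hroomω t ht1 (by omega) i)

end DamDual

theorem dual_solution_total_martingale_general {Ω : Type*} {mΩ : MeasurableSpace Ω}
    (P : Measure Ω) [IsProbabilityMeasure P]
    (T N : ℕ)
    (G : ℕ → MeasurableSpace Ω)
    (hG_le : ∀ t, G t ≤ mΩ)
    (S R : ℕ → Ω → Fin N → ℝ)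
    (V1 m : Fin N → ℝ) (Ctil : ℝ) (α : ℝ) (hα : α = 1)
    (hmart : ∀ s t, 1 ≤ s → s ≤ t → t ≤ T → ∀ i,
      P[(fun ω => S t ω i)|G s] =ᵐ[P] fun ω => S s ω i)
    (hV1 : ∀ i, 0 ≤ V1 i) (hC : 0 ≤ Ctil)
    (hR_nonneg : ∀ᵐ ω ∂P, ∀ t, 1 ≤ t → t ≤ T - 1 → ∀ i, 0 ≤ R t ω i)
    (hno_flood : ∀ᵐ ω ∂P, ∀ t, 1 ≤ t → t ≤ T - 1 → ∀ i,
      0 ≤ m i - V1 i - ∑ s ∈ Finset.Ico 1 t, R s ω i) :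
    DualFeasibleTotal P T G S α
        (fun _ _ _ => 0) (fun _ _ _ => 0) (fun _ _ _ => 0) (fun _ _ => 0) ∧
    dualValueTotal P T S R V1 m Ctil α
        (fun _ _ _ => 0) (fun _ _ _ => 0) (fun _ _ => 0)
      = ∫ ω, (∑ i, S T ω i * V1 i
          + ∑ t ∈ Finset.Ico 1 T, ∑ i, S T ω i * R t ω i) ∂P ∧
    ∀ (gam lam w : ℕ → Ω → Fin N → ℝ) (v : ℕ → Ω → ℝ),
      IsDualVariableTotal P T gam lam w v →
      DualFeasibleTotal P T G S α gam lam w v →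
      ∫ ω, (∑ i, S T ω i * V1 i
          + ∑ t ∈ Finset.Ico 1 T, ∑ i, S T ω i * R t ω i) ∂P
        ≤ dualValueTotal P T S R V1 m Ctil α lam w v := by
  subst hα
  exact ⟨dualFeasibleTotal_zero_of_martingale hG_le hmart,
    (dualValueTotal_zero S R V1 m Ctil 1).trans (one_mul _),
    fun _ _ _ _ hy _ => (one_mul _).symm.trans_le
      (le_dualValueTotal 1 hV1 hC hR_nonneg hno_flood hy)⟩

/-- **Solution of the total-production dual problem in the martingale case**:
if `α = 1`, the price process is a coordinatewise martingale w.r.t. `(G_t)`,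
`V(1) ≥ 0`, `C̃ ≥ 0`, `R(t) ≥ 0` a.s., and a.s. no dam would flood even without
draining, then the zero dual variable is total-production dual feasible with value
`d* = E[S(T)·V(1) + ∑_{t=1}^{T-1} S(T)·R(t)]`, and every total-production dual
feasible variable `y` satisfies `Φ̃(y) ≥ d*`; hence the optimal value of the
total-production dual problem is `d*`, attained at `y = 0`. -/
theorem dual_solution_total_martingale {Ω : Type*} {mΩ : MeasurableSpace Ω}
    (P : Measure Ω) [IsProbabilityMeasure P]
    (T N : ℕ) (hT : 2 ≤ T) (hN : 1 ≤ N)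
    (G : ℕ → MeasurableSpace Ω)
    (hG_mono : ∀ s t, s ≤ t → G s ≤ G t) (hG_le : ∀ t, G t ≤ mΩ)
    (S R : ℕ → Ω → Fin N → ℝ)
    (hS_adapted : ∀ t, 1 ≤ t → t ≤ T → Measurable[G t] (S t))
    (hS_bdd : ∃ C : ℝ, ∀ t ω i, |S t ω i| ≤ C)
    (hR_meas : ∀ t, Measurable (R t))
    (hR_bdd : ∃ C : ℝ, ∀ t ω i, |R t ω i| ≤ C)
    (V1 m : Fin N → ℝ) (Ctil : ℝ) (α : ℝ) (hα : α = 1)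
    (hmart : ∀ s t, 1 ≤ s → s ≤ t → t ≤ T → ∀ i,
      P[(fun ω => S t ω i)|G s] =ᵐ[P] fun ω => S s ω i)
    (hV1 : ∀ i, 0 ≤ V1 i) (hC : 0 ≤ Ctil)
    (hR_nonneg : ∀ᵐ ω ∂P, ∀ t, 1 ≤ t → t ≤ T - 1 → ∀ i, 0 ≤ R t ω i)
    (hno_flood : ∀ᵐ ω ∂P, ∀ t, 1 ≤ t → t ≤ T - 1 → ∀ i,
      0 ≤ m i - V1 i - ∑ s ∈ Finset.Ico 1 t, R s ω i) :
    DualFeasibleTotal P T G S α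
        (fun _ _ _ => 0) (fun _ _ _ => 0) (fun _ _ _ => 0) (fun _ _ => 0) ∧
    dualValueTotal P T S R V1 m Ctil α
        (fun _ _ _ => 0) (fun _ _ _ => 0) (fun _ _ => 0)
      = ∫ ω, (∑ i, S T ω i * V1 i
          + ∑ t ∈ Finset.Ico 1 T, ∑ i, S T ω i * R t ω i) ∂P ∧
    ∀ (gam lam w : ℕ → Ω → Fin N → ℝ) (v : ℕ → Ω → ℝ),
      IsDualVariableTotal P T gam lam w v →
      DualFeasibleTotal P T G S α gam lam w v →
      ∫ ω, (∑ i, S T ω i * V1 i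
          + ∑ t ∈ Finset.Ico 1 T, ∑ i, S T ω i * R t ω i) ∂P
        ≤ dualValueTotal P T S R V1 m Ctil α lam w v :=
  dual_solution_total_martingale_general P T N G hG_le S R V1 m Ctil α hα hmart hV1 hC hR_nonneg
    hno_flood
end
end
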